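/- Identity for the Darcy-side Robin update: if η_D' = η_S + (δ_f + δ_p) v, and the energy identity E + δ_f ‖v‖² = -⟨η_S, v⟩ holds with E ≥ 0, then ‖η_D'‖² = ‖η_S‖² - 2(δ_f + δ_p) E + (δ_p² - δ_f²)‖v‖². -/

import Mathlib

open RealInnerProductSpace

theorem norm_add_smul_sq_real {H : Type*} [NormedAddCommGroup H] [InnerProductSpace ℝ H]
    (x v : H) (c : ℝ) :
    ‖x + c • v‖ ^ 2 = ‖x‖ ^ 2 + 2 * c * ⟪x, v⟫ + c ^ 2 * ‖v‖ ^ 2 := by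
  rw [norm_add_sq_real, real_inner_smul_right, norm_smul, mul_pow, Real.norm_eq_abs, sq_abs]
  ring

theorem stmt_12_general {H : Type*} [NormedAddCommGroup H] [InnerProductSpace ℝ H]
    (ηS v : H) (δf δp E : ℝ)
    (henergy : E + δf * ‖v‖ ^ 2 = -⟪ηS, v⟫)
    (ηD' : H) (hdef : ηD' = ηS + (δf + δp) • v) :
    ‖ηD'‖ ^ 2 =
      ‖ηS‖ ^ 2 - 2 * (δf + δp) * E + (δp ^ 2 - δf ^ 2) * ‖v‖ ^ 2 := by
  rw [hdef, norm_add_smul_sq_real, ← neg_neg ⟪ηS, v⟫, ← henergy]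
  ring

/-- Identity for the Darcy-side Robin update: with
`η_D' = η_S + (δ_f + δ_p) v` and the energy identity
`E + δ_f ‖v‖² = -⟨η_S, v⟩`, one has
`‖η_D'‖² = ‖η_S‖² - 2(δ_f + δ_p) E + (δ_p² - δ_f²)‖v‖²`. -/
theorem stmt_12 {H : Type*} [NormedAddCommGroup H] [InnerProductSpace ℝ H]
    (ηS v : H) (δf δp E : ℝ) (hδf : 0 < δf) (hδp : 0 < δp) (hE : 0 ≤ E)
    (henergy : E + δf * ‖v‖ ^ 2 = -⟪ηS, v⟫)
    (ηD' : H) (hdef : ηD' = ηS + (δf + δp) • v) :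
    ‖ηD'‖ ^ 2 =
      ‖ηS‖ ^ 2 - 2 * (δf + δp) * E + (δp ^ 2 - δf ^ 2) * ‖v‖ ^ 2 :=
  stmt_12_general ηS v δf δp E henergy ηD' hdef
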